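/- The element (1/2; 0, −1; 1) of G is not a proper power: there is no element x ∈ G and integer m ≥ 2 with x^m = (1/2; 0, −1; 1). -/
import Mathlib


/-- The grading group `G` of the torus algebra: quadruples `(a; b, c; d)` with
`a, b, c ∈ (1/2)ℤ`, `d ∈ ℤ`, and `b + c ∈ ℤ`. -/
structure GGrp where
  a : ℚ
  b : ℚ
  c : ℚ
  d : ℤ
  ha : ∃ m : ℤ, a = m / 2
  hb : ∃ m : ℤ, b = m / 2
  hc : ∃ m : ℤ, c = m / 2
  hbc : ∃ m : ℤ, b + c = m

namespace GGrp

theorem ext' {x y : GGrp} (h1 : x.a = y.a) (h2 : x.b = y.b) (h3 : x.c = y.c)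
    (h4 : x.d = y.d) : x = y := by
  cases x; cases y; simp_all

/-- The group law `(a₁; b₁, c₁; d₁)·(a₂; b₂, c₂; d₂) =
`(a₁ + a₂ + b₁c₂ − c₁b₂; b₁ + b₂, c₁ + c₂; d₁ + d₂)`. -/
def mul (x y : GGrp) : GGrp where
  a := x.a + y.a + (x.b * y.c - x.c * y.b)
  b := x.b + y.b
  c := x.c + y.c
  d := x.d + y.d
  ha := by
    obtain ⟨m1, hm1⟩ := x.ha
    obtain ⟨m2, hm2⟩ := y.ha
    obtain ⟨p1, hp1⟩ := x.hb
    obtain ⟨p2, hp2⟩ := y.hb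
    obtain ⟨k1, hk1⟩ := x.hbc
    obtain ⟨k2, hk2⟩ := y.hbc
    refine ⟨m1 + m2 + (p1 * k2 - k1 * p2), ?_⟩
    have hc1 : x.c = (k1 : ℚ) - x.b := by linarith
    have hc2 : y.c = (k2 : ℚ) - y.b := by linarith
    rw [hm1, hm2, hc1, hc2, hp1, hp2]
    push_cast
    ring
  hb := by
    obtain ⟨p1, hp1⟩ := x.hb
    obtain ⟨p2, hp2⟩ := y.hb
    exact ⟨p1 + p2, by rw [hp1, hp2]; push_cast; ring⟩
  hc := by
    obtain ⟨q1, hq1⟩ := x.hc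
    obtain ⟨q2, hq2⟩ := y.hc
    exact ⟨q1 + q2, by rw [hq1, hq2]; push_cast; ring⟩
  hbc := by
    obtain ⟨k1, hk1⟩ := x.hbc
    obtain ⟨k2, hk2⟩ := y.hbc
    exact ⟨k1 + k2, by push_cast; linarith⟩

/-- The identity element `(0; 0, 0; 0)`. -/
def one : GGrp :=
  ⟨0, 0, 0, 0, ⟨0, by norm_num⟩, ⟨0, by norm_num⟩, ⟨0, by norm_num⟩, ⟨0, by norm_num⟩⟩

/-- The inverse `(−a; −b, −c; −d)`. -/
def inv (x : GGrp) : GGrp where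
  a := -x.a
  b := -x.b
  c := -x.c
  d := -x.d
  ha := by obtain ⟨m, hm⟩ := x.ha; exact ⟨-m, by rw [hm]; push_cast; ring⟩
  hb := by obtain ⟨m, hm⟩ := x.hb; exact ⟨-m, by rw [hm]; push_cast; ring⟩
  hc := by obtain ⟨m, hm⟩ := x.hc; exact ⟨-m, by rw [hm]; push_cast; ring⟩
  hbc := by obtain ⟨m, hm⟩ := x.hbc; exact ⟨-m, by push_cast; linarith⟩

instance : Mul GGrp := ⟨mul⟩
instance : One GGrp := ⟨one⟩
instance : Inv GGrp := ⟨inv⟩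

@[simp] lemma mul_a (x y : GGrp) : (x * y).a = x.a + y.a + (x.b * y.c - x.c * y.b) := rfl
@[simp] lemma mul_b (x y : GGrp) : (x * y).b = x.b + y.b := rfl
@[simp] lemma mul_c (x y : GGrp) : (x * y).c = x.c + y.c := rfl
@[simp] lemma mul_d (x y : GGrp) : (x * y).d = x.d + y.d := rfl
@[simp] lemma one_a : (1 : GGrp).a = 0 := rfl
@[simp] lemma one_b : (1 : GGrp).b = 0 := rfl
@[simp] lemma one_c : (1 : GGrp).c = 0 := rfl
@[simp] lemma one_d : (1 : GGrp).d = 0 := rfl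
@[simp] lemma inv_a (x : GGrp) : (x⁻¹).a = -x.a := rfl
@[simp] lemma inv_b (x : GGrp) : (x⁻¹).b = -x.b := rfl
@[simp] lemma inv_c (x : GGrp) : (x⁻¹).c = -x.c := rfl
@[simp] lemma inv_d (x : GGrp) : (x⁻¹).d = -x.d := rfl

instance : Group GGrp where
  mul_assoc x y z := ext' (by simp; ring) (by simp; ring) (by simp; ring) (by simp; ring)
  one_mul x := ext' (by simp) (by simp) (by simp) (by simp)
  mul_one x := ext' (by simp) (by simp) (by simp) (by simp)
  inv_mul_cancel x := ext' (by simp; ring) (by simp) (by simp) (by simp)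

end GGrp

/-- The element `(1/2; 0, −1; 1)` of `G`. -/
def periodicGr : GGrp :=
  ⟨1/2, 0, -1, 1, ⟨1, by norm_num⟩, ⟨0, by norm_num⟩, ⟨-2, by norm_num⟩, ⟨-1, by norm_num⟩⟩

lemma pow_d (x : GGrp) (n : ℕ) : (x ^ n).d = n * x.d := by
  induction n with
  | zero => simp
  | succ n ih => rw [pow_succ]; simp [ih]; ring

/-- `(1/2; 0, −1; 1)` is not a proper power in `G`: there is no `x ∈ G` and
integer `m ≥ 2` with `x^m = (1/2; 0, −1; 1)`. -/
theorem periodicGr_not_proper_power :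
    ¬ ∃ (x : GGrp) (m : ℤ), 2 ≤ m ∧ x ^ m = periodicGr := by
  rintro ⟨x, m, hm, hx⟩
  have hmn : m = (m.toNat : ℤ) := (Int.toNat_of_nonneg (by omega)).symm
  have hd : (x ^ m).d = 1 := by rw [hx]; rfl
  rw [hmn, zpow_natCast, pow_d] at hd
  have : (m.toNat : ℤ) ∣ 1 := ⟨x.d, hd.symm⟩
  have := Int.le_of_dvd one_pos this
  omega
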